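/- arXiv:2601.21121 — 5 statements merged into one kernel-verified Lean document; each statement's English description precedes it below -/
import Mathlib

section
/- Let m₀ be the smallest integer q > 1 with gcd(q, ρ₀) = 1. Then for every integer q > 1 with gcd(q, ρ₀) = 1, the minimum weight satisfies d_q = d_{m₀}. -/
open scoped BigOperators

namespace ArrCode

variable {k n : ℕ}

/-- The integer matrix `G` with entries reduced modulo `q`. -/
def Gmod (G : Matrix (Fin k) (Fin n) ℤ) (q : ℕ) : Matrix (Fin k) (Fin n) (ZMod q) :=
  G.map (Int.cast : ℤ → ZMod q)

/-- The code `C_G(q)` over `ℤ/qℤ` generated by the rows of `G`. -/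
def code (G : Matrix (Fin k) (Fin n) ℤ) (q : ℕ) : Set (Fin n → ZMod q) :=
  Set.range fun u : Fin k → ZMod q => Matrix.vecMul u (Gmod G q)

/-- `H_J(q) = { u ∈ (ℤ/qℤ)^k : u · g^j = 0 for all j ∈ J }`. -/
def HJ (G : Matrix (Fin k) (Fin n) ℤ) (J : Finset (Fin n)) (q : ℕ) :
    Set (Fin k → ZMod q) :=
  {u | ∀ j ∈ J, Matrix.vecMul u (Gmod G q) j = 0}

/-- The rank `r(J)` over `ℚ` of the column submatrix `G_J`. -/
noncomputable def rk (G : Matrix (Fin k) (Fin n) ℤ) (J : Finset (Fin n)) : ℕ :=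
  Matrix.rank (Matrix.of fun (i : Fin k) (j : J) => (G i j.1 : ℚ))

/-- The gcd of all `j × j` minors of the column submatrix `G_J`
(determinants of submatrices with repeated rows or columns vanish,
so this agrees with the usual minor gcd). -/
def minorGcd (G : Matrix (Fin k) (Fin n) ℤ) (J : Finset (Fin n)) (j : ℕ) : ℕ :=
  Finset.gcd Finset.univ fun p : (Fin j → Fin k) × (Fin j → J) =>
    ((G.submatrix p.1 fun l => (p.2 l : Fin n)).det).natAbs

/-- The `ℓ`-th elementary divisor (invariant factor) `e_{ℓ,J}` of `G_J`,
characterized by `e_{1,J} ⋯ e_{j,J} =` gcd of all `j × j` minors of `G_J`. -/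
def elemDiv (G : Matrix (Fin k) (Fin n) ℤ) (J : Finset (Fin n)) (ℓ : ℕ) : ℕ :=
  minorGcd G J ℓ / minorGcd G J (ℓ - 1)

/-- The lcm period `ρ₀ = lcm { e_{r(J),J} : ∅ ≠ J ⊆ E }`. -/
noncomputable def lcmPeriod (G : Matrix (Fin k) (Fin n) ℤ) : ℕ :=
  Finset.lcm ((Finset.univ : Finset (Fin n)).powerset.filter fun J => J ≠ ∅)
    fun J => elemDiv G J (rk G J)

/-- The minimum weight `d_q` of `C_G(q)` (equal to `+∞` when the code is trivial). -/
noncomputable def minWt (G : Matrix (Fin k) (Fin n) ℤ) (q : ℕ) : ℕ∞ :=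
  ⨅ (c : Fin n → ZMod q) (_ : c ∈ code G q) (_ : c ≠ 0), (hammingNorm c : ℕ∞)

/-- `A_{G,i}(q)`: the number of codewords of `C_G(q)` of Hamming weight `i`. -/
noncomputable def A (G : Matrix (Fin k) (Fin n) ℤ) (q i : ℕ) : ℕ :=
  {c ∈ code G q | hammingNorm c = i}.ncard

/-- The characteristic quasi-polynomial value: the number of `u ∈ (ℤ/qℤ)^k`
with every coordinate of `uG` nonzero. -/
noncomputable def chiQuasi (G : Matrix (Fin k) (Fin n) ℤ) (q : ℕ) : ℕ :=
  {u : Fin k → ZMod q | ∀ j, Matrix.vecMul u (Gmod G q) j ≠ 0}.ncard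

/-- `Π_{ℓ=1}^{r(J)} gcd(m, e_{ℓ,J})`. -/
noncomputable def gcdProd (G : Matrix (Fin k) (Fin n) ℤ) (m : ℕ) (J : Finset (Fin n)) : ℕ :=
  ∏ ℓ ∈ Finset.Icc 1 (rk G J), Nat.gcd m (elemDiv G J ℓ)

/-- The constituent polynomial `f_i^m(t) ∈ ℚ[t]`. -/
noncomputable def fPoly (G : Matrix (Fin k) (Fin n) ℤ) (m i : ℕ) : Polynomial ℚ :=
  ∑ J ∈ (Finset.univ : Finset (Fin n)).powerset.filter (fun J => J.card = n - i),
    ∑ K ∈ (Finset.univ : Finset (Fin n)).powerset.filter (fun K => J ⊆ K),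
      Polynomial.C ((-1 : ℚ) ^ (K.card - J.card) *
          (gcdProd G m K : ℚ) / (gcdProd G m Finset.univ : ℚ)) *
        Polynomial.X ^ (rk G Finset.univ - rk G K)

/-- `d'_m`: the least positive `i` such that `f_i^m` is not the zero polynomial. -/
noncomputable def dPrime (G : Matrix (Fin k) (Fin n) ℤ) (m : ℕ) : ℕ :=
  sInf {i : ℕ | 0 < i ∧ fPoly G m i ≠ 0}

end ArrCode

/-!
Fix a prime `p ∣ q`. As `p ∤ ρ₀`, `p` misses the last elementary divisor of every `G_J`, and an
adjugate argument then yields an `r(J)`-minor `D` of `G_J` prime to `p`. Bordering `D` by a row and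
a column `g^j` gives an `(r(J)+1)`-minor, which vanishes when `r(J) = r(E)` or `j ∈ J`; its Laplace
expansion shows that `uG_J = 0` forces `D · (uG)_j = 0`. Hence the zero set `J` of a nonzero
codeword of `C_G(q)` has `r(J) < r(E)`. Conversely, if `r(J) < r(E)`, then over `𝔽_p` the solutions
of `uG_J = 0` have dimension `≥ k - r(J) > k - r(E) ≥ dim {u | uG = 0}`, and `x ↦ (q/p)x` carries
a solution with `uG ≠ 0` into a codeword of `C_G(q)` vanishing on `J`. So
`d_q = n - max {|J| : r(J) < r(E)}` for every such `q`.
-/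
open Matrix

namespace Matrix

variable {m ι : Type*}

theorem det_submatrix_mul_vecMul_eq_zero {R : Type*} [CommRing R] [Fintype m] (A : Matrix m ι R)
    {s : ℕ} (p₁ : Fin s → m) (p₂ : Fin s → ι) (j : ι)
    (hA : ∀ i, (A.submatrix (Fin.cons i p₁) (Fin.cons j p₂)).det = 0)
    (u : m → R) (hu : ∀ a, (u ᵥ* A) (p₂ a) = 0) :
    (A.submatrix p₁ p₂).det * (u ᵥ* A) j = 0 := by
  -- the cofactors of the first row of the bordered minor do not depend on the border row `i`
  set C : Fin (s + 1) → R := fun b =>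
    (-1) ^ (b : ℕ) * (A.submatrix p₁ ((Fin.cons j p₂ : Fin (s + 1) → ι) ∘ b.succAbove)).det
  have hrow : ∀ i, ∑ b, C b * A i ((Fin.cons j p₂ : Fin (s + 1) → ι) b) = 0 := by
    intro i
    rw [← hA i, det_succ_row_zero]
    refine Finset.sum_congr rfl fun b _ => ?_
    simp only [C, submatrix_apply, submatrix_submatrix, Fin.cons_zero, Fin.cons_comp_succ]
    ring
  have hsum : ∑ b, C b * (u ᵥ* A) ((Fin.cons j p₂ : Fin (s + 1) → ι) b) = 0 := by
    simp only [vecMul, dotProduct, Finset.mul_sum]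
    rw [Finset.sum_comm]
    refine Finset.sum_eq_zero fun i _ => ?_
    rw [← mul_zero (u i), ← hrow i, Finset.mul_sum]
    exact Finset.sum_congr rfl fun b _ => by ring
  rw [Fin.sum_univ_succ] at hsum
  simpa [C, hu] using hsum

theorem le_rank_of_det_submatrix_ne_zero {R : Type*} [CommRing R] [IsDomain R] [Fintype ι]
    (A : Matrix m ι R) {s : ℕ} (f : Fin s → m) (g : Fin s → ι)
    (h : (A.submatrix f g).det ≠ 0) : s ≤ A.rank := by
  simpa [rank_of_det_ne_zero h] using rank_submatrix_le A f g

theorem finrank_ker_vecMulLinear_add_rank {F : Type*} [Field F] [Fintype m] [Fintype ι]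
    (B : Matrix m ι F) :
    Module.finrank F (LinearMap.ker B.vecMulLinear) + B.rank = Fintype.card m := by
  rw [← mulVecLin_transpose, ← rank_transpose, add_comm, rank,
    LinearMap.finrank_range_add_finrank_ker, Module.finrank_fintype_fun_eq_card]

theorem exists_vecMul_eq_zero_and_ne_zero_of_rank_lt {F : Type*} [Field F] [Fintype m]
    {ι' : Type*} [Fintype ι] [Fintype ι'] {B : Matrix m ι F} {B' : Matrix m ι' F}
    (h : B.rank < B'.rank) : ∃ u : m → F, u ᵥ* B = 0 ∧ u ᵥ* B' ≠ 0 := by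
  have hker : ¬ LinearMap.ker B.vecMulLinear ≤ LinearMap.ker B'.vecMulLinear := fun hle => by
    have := Submodule.finrank_mono hle
    have := finrank_ker_vecMulLinear_add_rank B
    have := finrank_ker_vecMulLinear_add_rank B'
    omega
  obtain ⟨u, hu, hu'⟩ := SetLike.not_le_iff_exists.mp hker
  exact ⟨u, hu, hu'⟩

theorem not_dvd_det_of_dvd_adjugate {R : Type*} [CommRing R] [IsDomain R] {s : ℕ}
    (M : Matrix (Fin (s + 1)) (Fin (s + 1)) R) {d p : R} (hp : Prime p) (hd : d ≠ 0)
    (hadj : ∀ a b, d ∣ M.adjugate a b) (hdet : ¬ d * p ∣ M.det) : ¬ p ∣ M.det := by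
  choose N hN using hadj
  obtain ⟨c, hc⟩ : d ∣ M.det := by
    rw [det_eq_sum_mul_adjugate_row M 0]
    exact Finset.dvd_sum fun b _ => (hN b 0).symm ▸ dvd_mul_of_dvd_right (dvd_mul_right _ _) _
  have hMN : M * of N = c • (1 : Matrix _ _ R) := by
    ext a b
    apply mul_left_cancel₀ hd
    have h1 : (M * M.adjugate) a b = d * (M * of N) a b := by
      simp only [mul_apply, of_apply, hN, Finset.mul_sum]
      exact Finset.sum_congr rfl fun _ _ => by ring
    rw [← h1, mul_adjugate, hc, smul_apply, smul_apply, smul_eq_mul, smul_eq_mul, mul_assoc]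
  have hpow : M.det * (of N).det = c ^ (s + 1) := by
    simpa using congrArg det hMN
  intro hpM
  obtain ⟨t, ht⟩ := hp.dvd_of_dvd_pow (hpow ▸ dvd_mul_of_dvd_left hpM _)
  exact hdet ⟨t, by rw [hc, ht, mul_assoc]⟩

end Matrix

theorem eq_zero_of_forall_prime_dvd_exists_zsmul_eq_zero {A : Type*} [AddGroup A] {q : ℕ}
    {x : A} (hq : q • x = 0)
    (h : ∀ p : ℕ, p.Prime → p ∣ q → ∃ D : ℤ, ¬ (p : ℤ) ∣ D ∧ D • x = 0) : x = 0 := by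
  by_contra hx
  set o := addOrderOf x
  have hp : o.minFac.Prime := Nat.minFac_prime fun h => hx (AddMonoid.addOrderOf_eq_one_iff.mp h)
  obtain ⟨D, hD, hDx⟩ := h _ hp ((Nat.minFac_dvd o).trans (addOrderOf_dvd_of_nsmul_eq_zero hq))
  exact hD ((Int.natCast_dvd_natCast.mpr (Nat.minFac_dvd o)).trans
    (addOrderOf_dvd_iff_zsmul_eq_zero.mpr hDx))

theorem ZMod.natCast_div_mul_intCast_eq_zero_iff {p q : ℕ} (hpq : p ∣ q) (hq : q ≠ 0) (S : ℤ) :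
    ((q / p : ℕ) : ZMod q) * (S : ZMod q) = 0 ↔ (S : ZMod p) = 0 := by
  obtain ⟨m, rfl⟩ := hpq
  have hm : m ≠ 0 := by rintro rfl; simp at hq
  have hp : p ≠ 0 := by rintro rfl; simp at hq
  rw [Nat.mul_div_cancel_left m (Nat.pos_of_ne_zero hp), ZMod.intCast_zmod_eq_zero_iff_dvd,
    show ((m : ℕ) : ZMod (p * m)) * S = ((m * S : ℤ) : ZMod (p * m)) by push_cast; rfl,
    ZMod.intCast_zmod_eq_zero_iff_dvd, Nat.cast_mul, mul_comm (p : ℤ),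
    mul_dvd_mul_iff_left (by exact_mod_cast hm)]

namespace ArrCode

section

variable {k n : ℕ} (G : Matrix (Fin k) (Fin n) ℤ)

theorem det_Gmod_submatrix (q : ℕ) {s : ℕ} (f : Fin s → Fin k) (g : Fin s → Fin n) :
    ((Gmod G q).submatrix f g).det = ((G.submatrix f g).det : ZMod q) :=
  (RingHom.map_det (Int.castRingHom (ZMod q)) _).symm

theorem vecMul_intCast_Gmod (q : ℕ) (w : Fin k → ℤ) (j : Fin n) :
    ((fun i => (w i : ZMod q)) ᵥ* Gmod G q) j = (((w ᵥ* G) j : ℤ) : ZMod q) :=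
  (RingHom.map_vecMul (Int.castRingHom (ZMod q)) G w j).symm

theorem rk_empty : rk G ∅ = 0 :=
  Nat.le_zero.mp ((rank_le_card_width _).trans_eq (by simp))

theorem le_rk_of_det_ne_zero {K : Finset (Fin n)} {s : ℕ} (f : Fin s → Fin k)
    (g : Fin s → Fin n) (hg : ∀ a, g a ∈ K) (h : (G.submatrix f g).det ≠ 0) : s ≤ rk G K := by
  refine le_rank_of_det_submatrix_ne_zero _ f (fun a => ⟨g a, hg a⟩) ?_
  exact fun h0 => h (Int.cast_eq_zero.mp ((RingHom.map_det (Int.castRingHom ℚ) _).trans h0))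

variable (J : Finset (Fin n))

theorem minorGcd_dvd_det {s : ℕ} (p₁ : Fin s → Fin k) (p₂ : Fin s → J) :
    (minorGcd G J s : ℤ) ∣ (G.submatrix p₁ fun l => (p₂ l : Fin n)).det :=
  Int.natCast_dvd.mpr (Finset.gcd_dvd (Finset.mem_univ (p₁, p₂)))

theorem minorGcd_dvd_minorGcd_succ (s : ℕ) : minorGcd G J s ∣ minorGcd G J (s + 1) := by
  refine Finset.dvd_gcd fun p _ => Int.natCast_dvd.mp ?_
  rw [det_succ_column_zero]
  refine Finset.dvd_sum fun i _ => dvd_mul_of_dvd_right ?_ _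
  rw [submatrix_submatrix]
  exact minorGcd_dvd_det G J _ (p.2 ∘ Fin.succ)

theorem elemDiv_zero : elemDiv G J 0 = 1 := by
  have : minorGcd G J 0 = 1 :=
    Nat.dvd_one.mp ((Finset.gcd_dvd (Finset.mem_univ (Fin.elim0, Fin.elim0))).trans (by simp))
  simp [elemDiv, this]

theorem exists_minor_not_dvd_of_not_dvd_elemDiv {p : ℕ} (hp : p.Prime) :
    ∀ {s : ℕ}, ¬ p ∣ elemDiv G J s → ∃ (p₁ : Fin s → Fin k) (p₂ : Fin s → J),
      ¬ (p : ℤ) ∣ (G.submatrix p₁ fun l => (p₂ l : Fin n)).det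
  | 0, _ => ⟨Fin.elim0, Fin.elim0, by
      rw [det_fin_zero]; exact_mod_cast hp.not_dvd_one⟩
  | s + 1, h => by
    have hd : minorGcd G J s ≠ 0 := fun h0 => h (by simp [elemDiv, h0])
    have hsucc : minorGcd G J (s + 1) = minorGcd G J s * elemDiv G J (s + 1) :=
      (Nat.mul_div_cancel' (minorGcd_dvd_minorGcd_succ G J s)).symm
    -- the gcd `minorGcd s * e_{s+1}` of the `(s+1)`-minors is not divisible by `minorGcd s * p`
    obtain ⟨⟨p₁, p₂⟩, hM⟩ : ∃ x : (Fin (s + 1) → Fin k) × (Fin (s + 1) → J),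
        ¬ (minorGcd G J s * p) ∣ (G.submatrix x.1 fun l => (x.2 l : Fin n)).det.natAbs := by
      by_contra! hall
      exact h (Nat.dvd_of_mul_dvd_mul_left (Nat.pos_of_ne_zero hd)
        (hsucc ▸ Finset.dvd_gcd fun x _ => hall x))
    refine ⟨p₁, p₂, not_dvd_det_of_dvd_adjugate _ (Nat.prime_iff_prime_int.mp hp)
      (Int.natCast_ne_zero.mpr hd) (fun a b => ?_)
      fun h' => hM (Int.natCast_dvd.mp (by exact_mod_cast h'))⟩
    rw [adjugate_fin_succ_eq_det_submatrix, submatrix_submatrix]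
    exact dvd_mul_of_dvd_right (minorGcd_dvd_det G J _ (p₂ ∘ a.succAbove)) _

variable {G J}

theorem not_dvd_elemDiv_rk {p : ℕ} (hp : p.Prime) (hρ : ¬ p ∣ lcmPeriod G) :
    ¬ p ∣ elemDiv G J (rk G J) := by
  rcases J.eq_empty_or_nonempty with rfl | hJ
  · rw [rk_empty, elemDiv_zero]
    exact hp.not_dvd_one
  · refine fun h => hρ (h.trans (Finset.dvd_lcm ?_))
    simpa using hJ.ne_empty

theorem exists_rk_minor_not_dvd {p : ℕ} (hp : p.Prime) (hρ : ¬ p ∣ lcmPeriod G) :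
    ∃ (p₁ : Fin (rk G J) → Fin k) (p₂ : Fin (rk G J) → J),
      ¬ (p : ℤ) ∣ (G.submatrix p₁ fun l => (p₂ l : Fin n)).det :=
  exists_minor_not_dvd_of_not_dvd_elemDiv G J hp (not_dvd_elemDiv_rk hp hρ)

theorem minor_mul_vecMul_eq_zero {q s : ℕ} (hs : rk G J ≤ s) (p₁ : Fin s → Fin k)
    {p₂ : Fin s → Fin n} (hp₂ : ∀ a, p₂ a ∈ J) {j : Fin n} (hj : j ∈ J) (u : Fin k → ZMod q)
    (hu : ∀ a, (u ᵥ* Gmod G q) (p₂ a) = 0) :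
    ((G.submatrix p₁ p₂).det : ZMod q) * (u ᵥ* Gmod G q) j = 0 := by
  rw [← det_Gmod_submatrix]
  refine det_submatrix_mul_vecMul_eq_zero _ p₁ p₂ j (fun i => ?_) u hu
  suffices (G.submatrix (Fin.cons i p₁) (Fin.cons j p₂)).det = 0 by
    rw [det_Gmod_submatrix, this, Int.cast_zero]
  by_contra h
  have := le_rk_of_det_ne_zero G _ _ (Fin.cases hj hp₂) h
  omega

theorem vecMul_Gmod_eq_zero_of_rk_le {q : ℕ} (hq : Nat.Coprime q (lcmPeriod G))
    (hJ : rk G Finset.univ ≤ rk G J) {u : Fin k → ZMod q}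
    (hu : ∀ l ∈ J, (u ᵥ* Gmod G q) l = 0) : u ᵥ* Gmod G q = 0 := by
  funext j
  rw [Pi.zero_apply]
  refine eq_zero_of_forall_prime_dvd_exists_zsmul_eq_zero (q := q) (by simp) fun p hp hpq => ?_
  obtain ⟨p₁, p₂, hD⟩ := exists_rk_minor_not_dvd (J := J) hp
    ((Nat.Prime.coprime_iff_not_dvd hp).mp (hq.coprime_dvd_left hpq))
  refine ⟨_, hD, ?_⟩
  rw [zsmul_eq_mul]
  exact minor_mul_vecMul_eq_zero hJ p₁ (fun a => Finset.mem_univ _) (Finset.mem_univ j) u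
    fun a => hu _ (p₂ a).2

theorem exists_codeword_ne_zero_vanishing_on_of_prime {p : ℕ} [Fact p.Prime]
    (hρ : ¬ p ∣ lcmPeriod G) (hJ : rk G J < rk G Finset.univ) :
    ∃ u : Fin k → ZMod p, (∀ l ∈ J, (u ᵥ* Gmod G p) l = 0) ∧ u ᵥ* Gmod G p ≠ 0 := by
  have hp : p.Prime := Fact.out
  obtain ⟨p₁, p₂, hD⟩ := exists_rk_minor_not_dvd (J := J) hp hρ
  obtain ⟨p₁', p₂', hD'⟩ := exists_rk_minor_not_dvd (J := Finset.univ) hp hρ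
  have hrank : ((Gmod G p).submatrix id fun a => (p₂ a : Fin n)).rank <
      ((Gmod G p).submatrix id fun b => (p₂' b : Fin n)).rank := by
    refine (rank_le_width _).trans_lt (hJ.trans_le (le_rank_of_det_submatrix_ne_zero _ p₁' id ?_))
    rwa [submatrix_submatrix, Function.id_comp, det_Gmod_submatrix, Ne,
      ZMod.intCast_zmod_eq_zero_iff_dvd]
  obtain ⟨u, hu, hu'⟩ := exists_vecMul_eq_zero_and_ne_zero_of_rank_lt hrank
  refine ⟨u, fun l hl => ?_, fun h => hu' ?_⟩
  · have := minor_mul_vecMul_eq_zero le_rfl p₁ (fun a => (p₂ a).2) hl u (congrFun hu)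
    refine (mul_eq_zero.mp this).resolve_left ?_
    rwa [ZMod.intCast_zmod_eq_zero_iff_dvd]
  · funext b
    exact congrFun h (p₂' b)

theorem exists_codeword_ne_zero_vanishing_on {q : ℕ} (hq : 1 < q)
    (hqρ : Nat.Coprime q (lcmPeriod G)) (hJ : rk G J < rk G Finset.univ) :
    ∃ u : Fin k → ZMod q, (∀ l ∈ J, (u ᵥ* Gmod G q) l = 0) ∧ u ᵥ* Gmod G q ≠ 0 := by
  set p := q.minFac
  have hp : p.Prime := Nat.minFac_prime hq.ne'
  have : Fact p.Prime := ⟨hp⟩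
  obtain ⟨u, huJ, hu⟩ := exists_codeword_ne_zero_vanishing_on_of_prime (J := J)
    ((Nat.Prime.coprime_iff_not_dvd hp).mp (hqρ.coprime_dvd_left q.minFac_dvd)) hJ
  -- `x ↦ (q / p) * x` embeds `ZMod p` into `ZMod q`
  set w : Fin k → ℤ := fun i => ((u i).val : ℤ)
  have hw : (fun i => (w i : ZMod p)) = u := funext fun i => by simp [w]
  have hvan : ∀ j, ((((q / p : ℕ) : ZMod q) • fun i => (w i : ZMod q)) ᵥ* Gmod G q) j = 0 ↔
      (u ᵥ* Gmod G p) j = 0 := fun j => by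
    rw [smul_vecMul, Pi.smul_apply, smul_eq_mul, vecMul_intCast_Gmod,
      ZMod.natCast_div_mul_intCast_eq_zero_iff q.minFac_dvd (by omega), ← hw, vecMul_intCast_Gmod]
  refine ⟨_, fun l hl => (hvan l).mpr (huJ l hl), fun h => hu (funext fun j => ?_)⟩
  exact (hvan j).mp (congrFun h j)

theorem minWt_le_minWt {q₁ q₂ : ℕ} (hq₁ : 1 < q₁) (hq₁ρ : Nat.Coprime q₁ (lcmPeriod G))
    (hq₂ρ : Nat.Coprime q₂ (lcmPeriod G)) : minWt G q₁ ≤ minWt G q₂ := by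
  refine le_iInf₂ fun c₂ ⟨u₂, hu₂⟩ => le_iInf fun hc₂ => ?_
  set J := Finset.univ.filter fun j => c₂ j = 0
  have hJ : rk G J < rk G Finset.univ := by
    by_contra! h
    exact hc₂ (hu₂ ▸ vecMul_Gmod_eq_zero_of_rk_le hq₂ρ h fun l hl => by
      simpa [J, hu₂] using hl)
  obtain ⟨u₁, hu₁J, hu₁⟩ := exists_codeword_ne_zero_vanishing_on hq₁ hq₁ρ hJ
  calc minWt G q₁ ≤ hammingNorm (u₁ ᵥ* Gmod G q₁) :=
        iInf₂_le_of_le _ ⟨u₁, rfl⟩ (iInf_le _ hu₁)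
    _ ≤ hammingNorm c₂ := by
        refine Nat.cast_le.mpr (Finset.card_le_card fun j => ?_)
        simp only [Finset.mem_filter, Finset.mem_univ, true_and]
        exact mt fun h => hu₁J j (by simpa [J] using h)

end

theorem stmt0_general (k n : ℕ) (G : Matrix (Fin k) (Fin n) ℤ)
    (m0 : ℕ) (hm0 : IsLeast {q : ℕ | 1 < q ∧ Nat.gcd q (lcmPeriod G) = 1} m0) :
    ∀ q : ℕ, 1 < q → Nat.gcd q (lcmPeriod G) = 1 → minWt G q = minWt G m0 := by
  intro q hq hqρ
  obtain ⟨⟨hm, hmρ⟩, -⟩ := hm0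
  exact le_antisymm (minWt_le_minWt hq hqρ hmρ) (minWt_le_minWt hm hmρ hqρ)

theorem stmt0 (k n : ℕ) (hk : 1 ≤ k) (hn : 1 ≤ n) (G : Matrix (Fin k) (Fin n) ℤ)
    (hG : ∀ j : Fin n, ∃ i : Fin k, G i j ≠ 0)
    (m0 : ℕ) (hm0 : IsLeast {q : ℕ | 1 < q ∧ Nat.gcd q (lcmPeriod G) = 1} m0) :
    ∀ q : ℕ, 1 < q → Nat.gcd q (lcmPeriod G) = 1 → minWt G q = minWt G m0 :=
  stmt0_general k n G m0 hm0

end ArrCode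
end

section
/- Let m ≥ 2 be a divisor of ρ₀ such that gcd(m, e_{r(E),E}) = 1, where e_{r(E),E} is the last elementary divisor of G = G_E. Then for every q ∈ ℤ_{>0} with gcd(q, ρ₀) = m, the minimum weight satisfies d_q = d_m. -/
open scoped BigOperators

/-!
Let `c` be a nonzero codeword of `C_G(q)` with zero set `J`. Then `u G = c` lies in
`H_J(q) \ H_E(q)`, so everything hinges on when `H_E(q) ⊊ H_J(q)`. A Smith normal form of `G_J`
gives `|H_J(q)| · q^{r(J)} = q^k ∏_l gcd(q, a_l)`, and each diagonal entry `a_l` divides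
`Δ_{r(J)} / Δ_{r(J)-1} = e_{r(J),J}` (with `Δ_j` the gcd of the `j × j` minors), hence `ρ₀`.
The `a_l` need not form a divisibility chain, but this is all that is needed:
`gcd(q, a_l) = gcd(m, a_l)`, for `J = E` these are `1` by the coprimality hypothesis, and
`H_E(q) ⊊ H_J(q)` becomes `r(J) < r(E) ∨ ∏_l gcd(m, a_l) > 1`, a condition that does not
involve `q`. So some nonzero codeword mod `m` vanishes on `J`, and `d_m ≤ d_q`. Conversely,
multiplication by `q / m` embeds `C_G(m)` into `C_G(q)` preserving supports, so `d_q ≤ d_m`.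
-/

namespace Matrix

section GcdMinors

variable {R : Type*} [CommRing R]

theorem det_mul_eq_sum_prod_mul_det_submatrix {j : ℕ} {ι : Type*} [Fintype ι]
    (X : Matrix (Fin j) ι R) (Y : Matrix ι (Fin j) R) :
    (X * Y).det = ∑ s : Fin j → ι, (∏ l, X l (s l)) * (Y.submatrix s id).det := by
  have hrows : X * Y = of fun l => ∑ x, X l x • Y x := by
    ext l j'
    simp [mul_apply]
  rw [hrows]
  exact (detRowAlternating.toMultilinearMap.map_sum _).trans
    (Finset.sum_congr rfl fun s _ => detRowAlternating.map_smul_univ _ _)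

theorem prod_dvd_det_submatrix_diagonal {m : Type*} [Fintype m] [DecidableEq m] (a : m → R)
    (s t : m → m) : (∏ i, a i) ∣ ((diagonal a).submatrix s t).det := by
  have h : (diagonal a).submatrix s t
      = (1 : Matrix m m R).submatrix s id * diagonal a * (1 : Matrix m m R).submatrix id t := by
    ext i j
    by_cases h : s i = t j <;> simp [mul_apply, one_apply, diagonal_apply, h]
  rw [h, det_mul, det_mul, det_diagonal]
  exact dvd_mul_of_dvd_left (dvd_mul_left _ _) _

variable {α β γ : Type*} [Fintype α] [Fintype β] [Fintype γ]

def gcdMinors (A : Matrix α β ℤ) (j : ℕ) : ℕ :=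
  Finset.univ.gcd fun p : (Fin j → α) × (Fin j → β) => (A.submatrix p.1 p.2).det.natAbs

theorem gcdMinors_dvd_det (A : Matrix α β ℤ) {j : ℕ} (s : Fin j → α) (t : Fin j → β) :
    (gcdMinors A j : ℤ) ∣ (A.submatrix s t).det :=
  Int.natCast_dvd.mpr (Finset.gcd_dvd (Finset.mem_univ (s, t)))

theorem dvd_gcdMinors {A : Matrix α β ℤ} {j d : ℕ}
    (h : ∀ (s : Fin j → α) (t : Fin j → β), (d : ℤ) ∣ (A.submatrix s t).det) :
    d ∣ gcdMinors A j :=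
  Finset.dvd_gcd fun p _ => Int.natCast_dvd.mp (h p.1 p.2)

theorem gcdMinors_zero (A : Matrix α β ℤ) : A.gcdMinors 0 = 1 := by
  have h := Finset.gcd_dvd (s := Finset.univ)
    (f := fun p : (Fin 0 → α) × (Fin 0 → β) => (A.submatrix p.1 p.2).det.natAbs)
    (Finset.mem_univ (Fin.elim0, Fin.elim0))
  simpa [gcdMinors] using h

theorem gcdMinors_transpose (A : Matrix α β ℤ) (j : ℕ) : gcdMinors Aᵀ j = gcdMinors A j :=
  Nat.dvd_antisymm
    (dvd_gcdMinors fun s t => by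
      simpa [← transpose_submatrix, det_transpose] using gcdMinors_dvd_det Aᵀ t s)
    (dvd_gcdMinors fun s t => by
      simpa [← transpose_submatrix, det_transpose] using gcdMinors_dvd_det A t s)

theorem gcdMinors_dvd_gcdMinors_mul_left (X : Matrix α γ ℤ) (Y : Matrix γ β ℤ) (j : ℕ) :
    gcdMinors Y j ∣ gcdMinors (X * Y) j :=
  dvd_gcdMinors fun s t => by
    rw [submatrix_mul _ _ s id t Function.bijective_id, det_mul_eq_sum_prod_mul_det_submatrix]
    exact Finset.dvd_sum fun s' _ => dvd_mul_of_dvd_right (gcdMinors_dvd_det Y s' t) _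

theorem gcdMinors_dvd_gcdMinors_mul_right (X : Matrix α γ ℤ) (Y : Matrix γ β ℤ) (j : ℕ) :
    gcdMinors X j ∣ gcdMinors (X * Y) j := by
  rw [← gcdMinors_transpose X, ← gcdMinors_transpose (X * Y), transpose_mul]
  exact gcdMinors_dvd_gcdMinors_mul_left Yᵀ Xᵀ j

theorem gcdMinors_eq_of_eq_mul_left {A : Matrix α β ℤ} {A' : Matrix γ β ℤ} {X : Matrix α γ ℤ}
    {Y : Matrix γ α ℤ} (hA : A = X * A') (hA' : A' = Y * A) (j : ℕ) :
    gcdMinors A j = gcdMinors A' j :=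
  Nat.dvd_antisymm (hA' ▸ gcdMinors_dvd_gcdMinors_mul_left Y A j)
    (hA ▸ gcdMinors_dvd_gcdMinors_mul_left X A' j)

theorem gcdMinors_eq_of_eq_mul_right {A : Matrix α β ℤ} {A' : Matrix α γ ℤ} {X : Matrix γ β ℤ}
    {Y : Matrix β γ ℤ} (hA : A = A' * X) (hA' : A' = A * Y) (j : ℕ) :
    gcdMinors A j = gcdMinors A' j :=
  Nat.dvd_antisymm (hA' ▸ gcdMinors_dvd_gcdMinors_mul_right A Y j)
    (hA ▸ gcdMinors_dvd_gcdMinors_mul_right A' X j)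

theorem gcdMinors_diagonal {r : ℕ} (a : Fin r → ℤ) :
    gcdMinors (diagonal a) r = (∏ i, a i).natAbs := by
  refine Nat.dvd_antisymm ?_ (dvd_gcdMinors fun s t => ?_)
  · simpa using Int.natAbs_dvd_natAbs.mpr (gcdMinors_dvd_det (diagonal a) id id)
  · exact Int.natAbs_dvd.mpr (prod_dvd_det_submatrix_diagonal a s t)

theorem natAbs_dvd_gcdMinors_diagonal_div {r : ℕ} (a : Fin r → ℤ) (l : Fin r) :
    (a l).natAbs ∣ gcdMinors (diagonal a) r / gcdMinors (diagonal a) (r - 1) := by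
  obtain _ | r := r
  · exact l.elim0
  have hprod : (∏ i, a i).natAbs = (∏ i, a (l.succAbove i)).natAbs * (a l).natAbs := by
    rw [Fin.prod_univ_succAbove a l, Int.natAbs_mul, mul_comm]
  have hminor : gcdMinors (diagonal a) r ∣ (∏ i, a (l.succAbove i)).natAbs := by
    have h := gcdMinors_dvd_det (diagonal a) l.succAbove l.succAbove
    rw [submatrix_diagonal _ _ Fin.succAbove_right_injective, det_diagonal] at h
    exact Int.natCast_dvd.mp h
  rw [Nat.add_sub_cancel, gcdMinors_diagonal, hprod]
  exact Nat.dvd_div_of_mul_dvd (mul_dvd_mul_right hminor _)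

end GcdMinors

section IntCast

variable {ι σ τ : Type*}

theorem map_intCast_mul {K : Type*} [Ring K] [Fintype τ] (X : Matrix ι τ ℤ) (Y : Matrix τ σ ℤ) :
    (X * Y).map (Int.cast : ℤ → K) = X.map (Int.cast : ℤ → K) * Y.map (Int.cast : ℤ → K) :=
  Matrix.map_mul (f := Int.castRingHom K)

theorem rank_map_intCast_eq_of_eq_mul_left {K : Type*} [Field K] [Fintype ι] [Fintype σ]
    [Fintype τ] {A : Matrix ι σ ℤ} {A' : Matrix τ σ ℤ} {X : Matrix ι τ ℤ} {Y : Matrix τ ι ℤ}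
    (hA : A = X * A') (hA' : A' = Y * A) :
    (A.map (Int.cast : ℤ → K)).rank = (A'.map (Int.cast : ℤ → K)).rank := by
  apply le_antisymm
  · rw [hA, map_intCast_mul]
    exact rank_mul_le_right _ _
  · rw [hA', map_intCast_mul]
    exact rank_mul_le_right _ _

theorem rank_map_intCast_eq_of_eq_mul_right {K : Type*} [Field K] [Fintype σ] [Fintype τ]
    {A : Matrix ι σ ℤ} {A' : Matrix ι τ ℤ} {X : Matrix τ σ ℤ} {Y : Matrix σ τ ℤ}
    (hA : A = A' * X) (hA' : A' = A * Y) :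
    (A.map (Int.cast : ℤ → K)).rank = (A'.map (Int.cast : ℤ → K)).rank := by
  apply le_antisymm
  · rw [hA, map_intCast_mul]
    exact rank_mul_le_left _ _
  · rw [hA', map_intCast_mul]
    exact rank_mul_le_left _ _

theorem exists_vecMul_map_intCast_eq_zero_iff [Fintype ι] {m q : ℕ} [NeZero m] [NeZero q]
    (hmq : m ∣ q) (B : Matrix ι σ ℤ) (v : ι → ZMod m) :
    ∃ u : ι → ZMod q, ∀ j,
      (u ᵥ* B.map (Int.cast : ℤ → ZMod q)) j = 0 ↔ (v ᵥ* B.map (Int.cast : ℤ → ZMod m)) j = 0 := by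
  obtain ⟨t, rfl⟩ := hmq
  have ht : (t : ℤ) ≠ 0 := by exact_mod_cast right_ne_zero_of_mul (NeZero.ne (m * t))
  let w : ι → ℤ := fun i => (v i).cast
  refine ⟨fun i => (((t : ℤ) • w) i : ZMod (m * t)), fun j => ?_⟩
  have hcast : ∀ (u : ι → ℤ) (p : ℕ),
      ((fun i => (u i : ZMod p)) ᵥ* B.map (Int.cast : ℤ → ZMod p)) j =
        (((u ᵥ* B) j : ℤ) : ZMod p) :=
    fun u p => by
      simpa [Function.comp_def] using (RingHom.map_vecMul (Int.castRingHom (ZMod p)) B u j).symm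
  have hv : v = fun i => (w i : ZMod m) := funext fun i => (ZMod.intCast_zmod_cast (v i)).symm
  rw [hcast, hv, hcast, ZMod.intCast_zmod_eq_zero_iff_dvd, ZMod.intCast_zmod_eq_zero_iff_dvd,
    smul_vecMul, Pi.smul_apply, smul_eq_mul]
  push_cast
  rw [mul_comm (m : ℤ), mul_dvd_mul_iff_left ht]

end IntCast

end Matrix

theorem AddMonoidHom.card_ker_mul_card_range {A B : Type*} [AddGroup A] [AddGroup B]
    (f : A →+ B) : Nat.card f.ker * Nat.card f.range = Nat.card A := by
  rw [← AddSubgroup.index_ker, AddSubgroup.card_mul_index]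

namespace ZMod

theorem card_mul_intCast_eq_zero (q : ℕ) [NeZero q] (c : ℤ) :
    Nat.card {x : ZMod q // x * c = 0} = q.gcd c.natAbs := by
  have h : ∀ x : ZMod q, x * c = 0 ↔ x ∈ (nsmulAddMonoidHom c.natAbs : ZMod q →+ ZMod q).ker := by
    intro x
    rw [AddMonoidHom.mem_ker, nsmulAddMonoidHom_apply, nsmul_eq_mul, mul_comm]
    obtain hc | hc := Int.natAbs_eq c <;> conv_lhs => rw [hc]
    all_goals simp
  rw [Nat.card_congr (Equiv.subtypeEquivRight h), IsAddCyclic.card_nsmulAddMonoidHom_ker,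
    Nat.card_zmod]

theorem card_forall_mul_intCast_eq_zero (q : ℕ) [NeZero q] {κ : Type*} [Fintype κ]
    (a : κ → ℤ) :
    Nat.card {y : κ → ZMod q // ∀ l, y l * a l = 0} = ∏ l, q.gcd (a l).natAbs := by
  rw [Nat.card_congr (Equiv.subtypePiEquivPi (α := κ) (β := fun _ => ZMod q)
    (p := fun l y => y * a l = 0)), Nat.card_pi]
  simp only [card_mul_intCast_eq_zero]

end ZMod

namespace Matrix

variable {ι σ : Type*} [Fintype ι]

theorem card_vecMul_mul_diagonal_eq_zero_mul_pow (q : ℕ) [NeZero q] {r : ℕ}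
    (P : Matrix ι (Fin r) ℤ) (hP : ∀ x, ∃ u, u ᵥ* P = x) (a : Fin r → ℤ) :
    Nat.card {u : ι → ZMod q // u ᵥ* (P * diagonal a).map Int.cast = 0} * q ^ r
      = q ^ Fintype.card ι * ∏ l, q.gcd (a l).natAbs := by
  set aq : Fin r → ZMod q := fun l => a l
  set θ := (vecMulLinear ((P * diagonal a).map (Int.cast : ℤ → ZMod q))).toAddMonoidHom
  set δ := (vecMulLinear (diagonal aq)).toAddMonoidHom
  have hmap : (P * diagonal a).map (Int.cast : ℤ → ZMod q) =
      P.map (Int.cast : ℤ → ZMod q) * diagonal aq := by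
    ext i l
    simp only [map_apply, mul_diagonal, Int.cast_mul, aq]
  have hθ : ∀ u, θ u = δ (u ᵥ* P.map (Int.cast : ℤ → ZMod q)) := fun u => by
    simp only [θ, δ, LinearMap.toAddMonoidHom_coe, vecMulLinear_apply, hmap, vecMul_vecMul]
  have hPq : ∀ y : Fin r → ZMod q, ∃ u, u ᵥ* P.map (Int.cast : ℤ → ZMod q) = y := fun y => by
    obtain ⟨u, hu⟩ := hP fun l => (y l).cast
    refine ⟨fun i => u i, funext fun l => ?_⟩
    simpa [hu, Function.comp_def] using
      (RingHom.map_vecMul (Int.castRingHom (ZMod q)) P u l).symm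
  have hrange : θ.range = δ.range := by
    ext z
    simp only [AddMonoidHom.mem_range, hθ]
    exact ⟨fun ⟨u, hu⟩ => ⟨_, hu⟩, fun ⟨y, hy⟩ => (hPq y).imp fun u hu => by rw [hu]; exact hy⟩
  have hkerδ : Nat.card δ.ker = ∏ l, q.gcd (a l).natAbs := by
    rw [← ZMod.card_forall_mul_intCast_eq_zero q a]
    refine Nat.card_congr (Equiv.subtypeEquivRight fun y => ?_)
    simp [δ, aq, funext_iff, vecMul_diagonal]
  have hθcard := θ.card_ker_mul_card_range
  have hδcard := δ.card_ker_mul_card_range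
  simp only [Nat.card_pi, Nat.card_zmod, Finset.prod_const, Finset.card_univ,
    Fintype.card_fin] at hθcard hδcard
  change Nat.card θ.ker * q ^ r = _
  rw [← hδcard, ← hθcard, ← hkerδ, hrange]
  ring

variable [DecidableEq ι] [Fintype σ] [DecidableEq σ]

theorem exists_eq_mul_diagonal_mul (B : Matrix ι σ ℤ) :
    ∃ (r : ℕ) (a : Fin r → ℤ) (P : Matrix ι (Fin r) ℤ) (W : Matrix (Fin r) ι ℤ)
      (R : Matrix (Fin r) σ ℤ) (R' : Matrix σ (Fin r) ℤ),
      (∀ l, a l ≠ 0) ∧ R * R' = 1 ∧ B = P * (diagonal a * R) ∧ diagonal a * R = W * B ∧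
      ∀ x, ∃ u, u ᵥ* P = x := by
  let N := LinearMap.range (vecMulLinear B)
  obtain ⟨r, bM, bN, f, a, hsnf⟩ := N.smithNormalForm (Pi.basisFun ℤ σ)
  let Mh : Matrix σ σ ℤ := ((Pi.basisFun ℤ σ).toMatrix bM)ᵀ
  let Mh' : Matrix σ σ ℤ := (bM.toMatrix (Pi.basisFun ℤ σ))ᵀ
  have hMh : Mh * Mh' = 1 := by
    rw [← transpose_mul, Module.Basis.toMatrix_mul_toMatrix_flip, transpose_one]
  let R := Mh.submatrix f id
  have hrows : ∀ l, (diagonal a * R) l = (bN l : σ → ℤ) := fun l => by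
    ext j
    simp [R, Mh, hsnf l, diagonal_mul, Module.Basis.toMatrix_apply]
  let ψ : (ι → ℤ) →ₗ[ℤ] (Fin r → ℤ) :=
    (Finsupp.linearEquivFunOnFinite ℤ ℤ (Fin r)).toLinearMap ∘ₗ bN.repr.toLinearMap ∘ₗ
      (vecMulLinear B).rangeRestrict
  let P := (LinearMap.toMatrix' ψ)ᵀ
  have hP : ∀ u, u ᵥ* P = ψ u := fun u => by
    rw [vecMul_transpose, LinearMap.toMatrix'_mulVec]
  have hsum : ∀ v : N, ∑ l, bN.repr v l • (bN l : σ → ℤ) = v := fun v => by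
    conv_rhs => rw [← bN.sum_repr v]
    simp only [AddSubmonoidClass.coe_finsetSum, Submodule.coe_smul]
  have hw : ∀ l, ∃ w, w ᵥ* B = (bN l : σ → ℤ) := fun l => (bN l).2
  choose w hw using hw
  refine ⟨r, a, P, of w, R, Mh'.submatrix id f, fun l hl => bN.ne_zero l ?_, ?_, ?_, ?_, ?_⟩
  · exact Subtype.ext (by simp [hsnf l, hl])
  · rw [← submatrix_mul _ _ _ _ _ Function.bijective_id, hMh, submatrix_one _ f.injective]
  · funext i
    have hPi : P i = ψ (Pi.single i 1) := by rw [← hP, single_one_vecMul]; rfl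
    calc B i = ((vecMulLinear B).rangeRestrict (Pi.single i 1) : σ → ℤ) := by
          simp; rfl
      _ = ∑ l, ψ (Pi.single i 1) l • (bN l : σ → ℤ) := (hsum _).symm
      _ = (P * (diagonal a * R)) i := by
          simp only [mul_apply_eq_vecMul, vecMul_eq_sum, hPi, hrows]
  · funext l
    rw [hrows, mul_apply_eq_vecMul]
    exact (hw l).symm
  · intro x
    have hψ : Function.Surjective ψ := by
      simp only [ψ, LinearMap.coe_comp, LinearEquiv.coe_coe]
      exact (LinearEquiv.surjective _).comp
        ((LinearEquiv.surjective _).comp (LinearMap.surjective_rangeRestrict _))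
    obtain ⟨u, hu⟩ := hψ x
    exact ⟨u, (hP u).trans hu⟩

theorem exists_card_vecMul_eq_zero_mul_pow (B : Matrix ι σ ℤ) :
    ∃ a : Fin (B.map (Int.cast : ℤ → ℚ)).rank → ℕ,
      (∀ l, a l ∣ gcdMinors B (B.map (Int.cast : ℤ → ℚ)).rank /
        gcdMinors B ((B.map (Int.cast : ℤ → ℚ)).rank - 1)) ∧
      ∀ (q : ℕ) [NeZero q], Nat.card {u : ι → ZMod q // u ᵥ* B.map Int.cast = 0} *
        q ^ (B.map (Int.cast : ℤ → ℚ)).rank = q ^ Fintype.card ι * ∏ l, q.gcd (a l) := by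
  obtain ⟨r, a, P, W, R, R', ha, hR, hB, hW, hP⟩ := exists_eq_mul_diagonal_mul B
  have hD : diagonal a = diagonal a * R * R' := by rw [Matrix.mul_assoc, hR, Matrix.mul_one]
  have hrank : (B.map (Int.cast : ℤ → ℚ)).rank = r := by
    rw [rank_map_intCast_eq_of_eq_mul_left hB hW, rank_map_intCast_eq_of_eq_mul_right rfl hD,
      diagonal_map (by simp), rank_diagonal]
    simp [ha]
  have hdvd : ∀ l, (a l).natAbs ∣ gcdMinors B r / gcdMinors B (r - 1) := fun l => by
    have hminors : ∀ j, gcdMinors B j = gcdMinors (diagonal a) j := fun j =>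
      (gcdMinors_eq_of_eq_mul_left hB hW j).trans (gcdMinors_eq_of_eq_mul_right rfl hD j)
    simpa only [hminors] using natAbs_dvd_gcdMinors_diagonal_div a l
  have hcount : ∀ (q : ℕ) [NeZero q], Nat.card {u : ι → ZMod q // u ᵥ* B.map Int.cast = 0} *
      q ^ r = q ^ Fintype.card ι * ∏ l, q.gcd (a l).natAbs := fun q _ => by
    have hBq : B.map (Int.cast : ℤ → ZMod q) =
        (P * diagonal a).map (Int.cast : ℤ → ZMod q) * R.map (Int.cast : ℤ → ZMod q) := by
      rw [hB, ← Matrix.mul_assoc, map_intCast_mul]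
    have hRq : R.map (Int.cast : ℤ → ZMod q) * R'.map (Int.cast : ℤ → ZMod q) = 1 := by
      rw [← map_intCast_mul, hR, Matrix.map_one _ Int.cast_zero Int.cast_one]
    have hker : ∀ u : ι → ZMod q,
        u ᵥ* B.map Int.cast = 0 ↔ u ᵥ* (P * diagonal a).map Int.cast = 0 := fun u => by
      refine ⟨fun h => ?_, fun h => by rw [hBq, ← vecMul_vecMul, h, zero_vecMul]⟩
      rw [← vecMul_one (u ᵥ* _), ← hRq, vecMul_vecMul, ← Matrix.mul_assoc, ← hBq,
        ← vecMul_vecMul, h, zero_vecMul]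
    rw [Nat.card_congr (Equiv.subtypeEquivRight hker)]
    exact card_vecMul_mul_diagonal_eq_zero_mul_pow q P hP a
  subst hrank
  exact ⟨_, hdvd, hcount⟩

end Matrix

theorem Set.ssubset_iff_card_lt {α : Type*} [Finite α] {s t : Set α} (hst : s ⊆ t) :
    s ⊂ t ↔ Nat.card s < Nat.card t := by
  rw [Nat.card_coe_set_eq, Nat.card_coe_set_eq]
  exact ⟨fun h => Set.ncard_lt_ncard h,
    fun h => hst.ssubset_of_ne (by rintro rfl; exact lt_irrefl _ h)⟩

theorem Nat.lt_iff_of_mul_pow_eq {s t P q a b k : ℕ} (hq : 2 ≤ q) (hab : a ≤ b) (hP : 0 < P)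
    (hs : s * q ^ b = q ^ k) (ht : t * q ^ a = q ^ k * P) : s < t ↔ a < b ∨ 1 < P := by
  have hqb : 0 < q ^ b := by positivity
  have hst : s < t ↔ q ^ a < P * q ^ b := by
    have e1 : s * (q ^ b * q ^ a) = q ^ k * q ^ a := by rw [← mul_assoc, hs]
    have e2 : t * (q ^ b * q ^ a) = q ^ k * (P * q ^ b) := by
      rw [mul_comm (q ^ b), ← mul_assoc, ht]; ring
    rw [← Nat.mul_lt_mul_right (by positivity : 0 < q ^ b * q ^ a), e1, e2,
      Nat.mul_lt_mul_left (by positivity)]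
  rw [hst]
  constructor
  · intro h
    by_contra! hc
    obtain rfl : a = b := le_antisymm hab hc.1
    obtain rfl : P = 1 := by omega
    simp at h
  · rintro (h | h)
    · exact (Nat.pow_lt_pow_right hq h).trans_le (Nat.le_mul_of_pos_left _ hP)
    · exact (Nat.pow_le_pow_right (by omega) hab).trans_lt
        ((Nat.lt_mul_iff_one_lt_left hqb).mpr h)

namespace ArrCode

open Matrix

variable {k n : ℕ} (G : Matrix (Fin k) (Fin n) ℤ)

theorem rk_mono {J K : Finset (Fin n)} (hJK : J ⊆ K) : rk G J ≤ rk G K :=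
  rank_submatrix_le (Matrix.of fun (i : Fin k) (j : K) => (G i j.1 : ℚ)) id
    (fun j : J => ⟨j.1, hJK j.2⟩)

theorem elemDiv_rk_dvd_lcmPeriod (J : Finset (Fin n)) : elemDiv G J (rk G J) ∣ lcmPeriod G := by
  obtain rfl | hJ := eq_or_ne J ∅
  · have h0 : rk G ∅ = 0 := Nat.le_zero.mp ((rank_le_card_width _).trans (by simp))
    have h1 : minorGcd G ∅ 0 = 1 := gcdMinors_zero (G.submatrix id Subtype.val)
    simp [elemDiv, h0, h1]
  · exact Finset.dvd_lcm (Finset.mem_filter.mpr ⟨Finset.mem_powerset.mpr J.subset_univ, hJ⟩)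

theorem mem_HJ_univ_iff {q : ℕ} {u : Fin k → ZMod q} :
    u ∈ HJ G Finset.univ q ↔ u ᵥ* Gmod G q = 0 := by
  simp [HJ, funext_iff]

theorem HJ_univ_subset (J : Finset (Fin n)) (q : ℕ) : HJ G Finset.univ q ⊆ HJ G J q :=
  fun _ hu j _ => hu j (Finset.mem_univ j)

theorem exists_card_HJ_mul_pow (J : Finset (Fin n)) :
    ∃ a : Fin (rk G J) → ℕ, (∀ l, a l ∣ elemDiv G J (rk G J)) ∧
      ∀ (q : ℕ) [NeZero q], Nat.card (HJ G J q) * q ^ rk G J = q ^ k * ∏ l, q.gcd (a l) := by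
  obtain ⟨a, hdvd, hcard⟩ := (G.submatrix id ((↑) : J → Fin n)).exists_card_vecMul_eq_zero_mul_pow
  refine ⟨a, hdvd, fun q _ => ?_⟩
  have hHJ : HJ G J q ≃ {u : Fin k → ZMod q //
      u ᵥ* (G.submatrix id ((↑) : J → Fin n)).map (Int.cast : ℤ → ZMod q) = 0} :=
    Equiv.subtypeEquivRight fun u =>
      ⟨fun h => funext fun j => h j.1 j.2, fun h j hj => congrFun h ⟨j, hj⟩⟩
  have h := hcard q
  rw [Fintype.card_fin] at h
  rw [Nat.card_congr hHJ]
  exact h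

theorem HJ_univ_ssubset_HJ_iff_of_gcd_eq (J : Finset (Fin n)) {m q : ℕ} (hm : 2 ≤ m) (hq : 2 ≤ q)
    (hgcd : ∀ x, x ∣ lcmPeriod G → q.gcd x = m.gcd x)
    (hcop : m.gcd (elemDiv G Finset.univ (rk G Finset.univ)) = 1) :
    HJ G Finset.univ q ⊂ HJ G J q ↔ HJ G Finset.univ m ⊂ HJ G J m := by
  obtain ⟨aJ, hJ, hcardJ⟩ := exists_card_HJ_mul_pow G J
  obtain ⟨aE, hE, hcardE⟩ := exists_card_HJ_mul_pow G Finset.univ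
  have hcrit : ∀ p, 2 ≤ p → (∀ x, x ∣ lcmPeriod G → p.gcd x = m.gcd x) →
      (HJ G Finset.univ p ⊂ HJ G J p ↔ rk G J < rk G Finset.univ ∨ 1 < ∏ l, m.gcd (aJ l)) := by
    intro p hp hpgcd
    have : NeZero p := ⟨by omega⟩
    have hcopE : ∏ l, p.gcd (aE l) = 1 := Finset.prod_eq_one fun l _ => by
      rw [hpgcd _ ((hE l).trans (elemDiv_rk_dvd_lcmPeriod G _))]
      exact Nat.Coprime.coprime_dvd_right (hE l) hcop
    have hJm : ∏ l, p.gcd (aJ l) = ∏ l, m.gcd (aJ l) := Finset.prod_congr rfl fun l _ =>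
      hpgcd _ ((hJ l).trans (elemDiv_rk_dvd_lcmPeriod G J))
    rw [Set.ssubset_iff_card_lt (HJ_univ_subset G J p)]
    exact Nat.lt_iff_of_mul_pow_eq hp (rk_mono G J.subset_univ)
      (Finset.prod_pos fun l _ => Nat.gcd_pos_of_pos_left _ (by omega))
      (by simpa [hcopE] using hcardE p) (hJm ▸ hcardJ p)
  rw [hcrit q hq hgcd, hcrit m hm fun _ _ => rfl]

theorem exists_mem_code_of_gcd_eq {m q : ℕ} (hm : 2 ≤ m) (hq : 2 ≤ q)
    (hgcd : ∀ x, x ∣ lcmPeriod G → q.gcd x = m.gcd x)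
    (hcop : m.gcd (elemDiv G Finset.univ (rk G Finset.univ)) = 1) {u : Fin k → ZMod q}
    (hu : u ᵥ* Gmod G q ≠ 0) :
    ∃ c ∈ code G m, c ≠ 0 ∧ ∀ j, (u ᵥ* Gmod G q) j = 0 → c j = 0 := by
  let J := Finset.univ.filter fun j => (u ᵥ* Gmod G q) j = 0
  have hqJ : HJ G Finset.univ q ⊂ HJ G J q :=
    (Set.ssubset_iff_of_subset (HJ_univ_subset G J q)).mpr
      ⟨u, fun j hj => (Finset.mem_filter.mp hj).2, fun h => hu ((mem_HJ_univ_iff G).mp h)⟩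
  obtain ⟨v, hvJ, hvE⟩ := (Set.ssubset_iff_of_subset (HJ_univ_subset G J m)).mp
    ((HJ_univ_ssubset_HJ_iff_of_gcd_eq G J hm hq hgcd hcop).mp hqJ)
  exact ⟨_, ⟨v, rfl⟩, fun h => hvE ((mem_HJ_univ_iff G).mpr h),
    fun j hj => hvJ j (Finset.mem_filter.mpr ⟨Finset.mem_univ j, hj⟩)⟩

theorem exists_mem_code_of_dvd {m q : ℕ} [NeZero m] [NeZero q] (hmq : m ∣ q)
    {v : Fin k → ZMod m} (hv : v ᵥ* Gmod G m ≠ 0) :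
    ∃ c ∈ code G q, c ≠ 0 ∧ ∀ j, (v ᵥ* Gmod G m) j = 0 → c j = 0 := by
  obtain ⟨u, hu⟩ := exists_vecMul_map_intCast_eq_zero_iff hmq G v
  exact ⟨_, ⟨u, rfl⟩, fun h => hv (funext fun j => (hu j).mp (congrFun h j)),
    fun j => (hu j).mpr⟩

theorem minWt_le_minWt_of_forall {q q' : ℕ}
    (h : ∀ c ∈ code G q, c ≠ 0 → ∃ c' ∈ code G q', c' ≠ 0 ∧ ∀ j, c j = 0 → c' j = 0) :
    minWt G q' ≤ minWt G q := by
  refine le_iInf₂ fun c hc => le_iInf fun hc0 => ?_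
  obtain ⟨c', hc', hc'0, hzero⟩ := h c hc hc0
  refine (iInf₂_le c' hc').trans ((iInf_le _ hc'0).trans ?_)
  refine Nat.cast_le.mpr (Finset.card_le_card fun j hj => ?_)
  simp only [Finset.mem_filter] at hj ⊢
  exact ⟨hj.1, fun h0 => hj.2 (hzero j h0)⟩

theorem stmt1_general (k n : ℕ) (G : Matrix (Fin k) (Fin n) ℤ)
    (m : ℕ) (hm2 : 2 ≤ m)
    (hcop : Nat.gcd m (elemDiv G Finset.univ (rk G Finset.univ)) = 1) :
    ∀ q : ℕ, 0 < q → Nat.gcd q (lcmPeriod G) = m → minWt G q = minWt G m := by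
  intro q hq hgcd
  have hmq : m ∣ q := hgcd ▸ Nat.gcd_dvd_left q _
  have hgcd' : ∀ x, x ∣ lcmPeriod G → q.gcd x = m.gcd x := fun x hx => by
    rw [← hgcd, Nat.gcd_assoc, Nat.gcd_eq_right hx]
  have : NeZero q := ⟨hq.ne'⟩
  have : NeZero m := ⟨by omega⟩
  refine le_antisymm (minWt_le_minWt_of_forall G ?_) (minWt_le_minWt_of_forall G ?_)
  · rintro _ ⟨v, rfl⟩ hv
    exact exists_mem_code_of_dvd G hmq hv
  · rintro _ ⟨u, rfl⟩ hu
    exact exists_mem_code_of_gcd_eq G hm2 (hm2.trans (Nat.le_of_dvd hq hmq)) hgcd' hcop hu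

theorem stmt1 (k n : ℕ) (hk : 1 ≤ k) (hn : 1 ≤ n) (G : Matrix (Fin k) (Fin n) ℤ)
    (hG : ∀ j : Fin n, ∃ i : Fin k, G i j ≠ 0)
    (m : ℕ) (hm2 : 2 ≤ m) (hmdvd : m ∣ lcmPeriod G)
    (hcop : Nat.gcd m (elemDiv G Finset.univ (rk G Finset.univ)) = 1) :
    ∀ q : ℕ, 0 < q → Nat.gcd q (lcmPeriod G) = m → minWt G q = minWt G m :=
  stmt1_general k n G m hm2 hcop

end ArrCode
end

section
/- For every q ∈ ℤ_{>0} and every subset J ⊆ E, #{ c ∈ C_G(q) : supp(c) = E ∖ J } · #H_E(q) = #( H_J(q) ∖ ⋃_{j ∈ E∖J} H_{{j}}(q) ), where supp(c) denotes the set of indices of nonzero coordinates of c. -/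
open scoped BigOperators

/-! `u ↦ uG` is an additive homomorphism `(ℤ/qℤ)^k → (ℤ/qℤ)^n` with image `C_G(q)` and kernel
`H_E(q)`, and `H_J(q) ∖ ⋃_{j ∉ J} H_{{j}}(q)` is the preimage of the codewords with support
`E ∖ J`. Every nonempty fibre of a homomorphism is a coset of its kernel, so the preimage of a set
of codewords has size (number of codewords) · `#H_E(q)`. -/

theorem AddMonoidHom.ncard_preimage_of_subset_range {A B : Type*} [AddGroup A] [Finite A]
    [AddGroup B] (f : A →+ B) {T : Set B} (hT : T ⊆ Set.range f) :
    (f ⁻¹' T).ncard = T.ncard * (f.ker : Set A).ncard := by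
  have hTfin : T.Finite := (Set.finite_range f).subset hT
  have hfiber : ∀ b ∈ hTfin.toFinset, Nat.card {a // f a = b} = Nat.card f.ker := by
    intro b hb
    obtain ⟨a, rfl⟩ := hT (hTfin.mem_toFinset.mp hb)
    exact Nat.card_congr (f.fiberEquivKer a)
  rw [← Nat.card_coe_set_eq, ← hTfin.coe_toFinset,
    Finset.card_preimage_eq_sum_card_image_eq fun _ _ => Set.toFinite _,
    Finset.sum_congr rfl hfiber, Finset.sum_const, smul_eq_mul, ← Set.ncard_coe_finset]
  rfl

namespace ArrCode

variable {k n : ℕ}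

theorem HJ_univ_eq_ker (G : Matrix (Fin k) (Fin n) ℤ) (q : ℕ) :
    HJ G Finset.univ q = ((Gmod G q).vecMulLinear.toAddMonoidHom.ker : Set (Fin k → ZMod q)) := by
  ext u
  simp [HJ, funext_iff]

theorem mem_HJ_diff_iUnion_iff (G : Matrix (Fin k) (Fin n) ℤ) (J : Finset (Fin n)) (q : ℕ)
    (u : Fin k → ZMod q) :
    u ∈ HJ G J q \ ⋃ j ∈ (↑(Jᶜ) : Set (Fin n)), HJ G {j} q ↔
      (Finset.univ.filter fun j => Matrix.vecMul u (Gmod G q) j ≠ 0) = Jᶜ := by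
  simp only [HJ, Set.mem_sdiff, Set.mem_iUnion, Finset.coe_compl, Set.mem_compl_iff,
    Finset.mem_coe, exists_prop, not_exists, not_and, Finset.ext_iff, Finset.mem_filter,
    Finset.mem_univ, true_and, Finset.mem_compl]
  grind

theorem stmt4_general (k n : ℕ) (G : Matrix (Fin k) (Fin n) ℤ)
    (q : ℕ) (hq : 0 < q) (J : Finset (Fin n)) :
    {c ∈ code G q | (Finset.univ.filter fun j => c j ≠ 0) = Jᶜ}.ncard *
        (HJ G Finset.univ q).ncard =
      (HJ G J q \ ⋃ j ∈ (↑(Jᶜ) : Set (Fin n)), HJ G {j} q).ncard := by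
  have : NeZero q := ⟨hq.ne'⟩
  set φ := (Gmod G q).vecMulLinear.toAddMonoidHom
  have hpre : HJ G J q \ ⋃ j ∈ (↑(Jᶜ) : Set (Fin n)), HJ G {j} q =
      φ ⁻¹' {c ∈ code G q | (Finset.univ.filter fun j => c j ≠ 0) = Jᶜ} := by
    ext u
    exact (mem_HJ_diff_iUnion_iff G J q u).trans (and_iff_right ⟨u, rfl⟩).symm
  rw [hpre, HJ_univ_eq_ker, φ.ncard_preimage_of_subset_range fun _ hc => hc.1]

theorem stmt4 (k n : ℕ) (hk : 1 ≤ k) (hn : 1 ≤ n) (G : Matrix (Fin k) (Fin n) ℤ)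
    (hG : ∀ j : Fin n, ∃ i : Fin k, G i j ≠ 0)
    (q : ℕ) (hq : 0 < q) (J : Finset (Fin n)) :
    {c ∈ code G q | (Finset.univ.filter fun j => c j ≠ 0) = Jᶜ}.ncard *
        (HJ G Finset.univ q).ncard =
      (HJ G J q \ ⋃ j ∈ (↑(Jᶜ) : Set (Fin n)), HJ G {j} q).ncard :=
  stmt4_general k n G q hq J

end ArrCode
end

section
/- For every m ∈ {1,…,ρ₀}, f^m_{d'_m}(t) = Σ_{J ⊆ E, |J| = n − d'_m} ( (Π_{ℓ=1}^{r(J)} gcd(m, e_{ℓ,J}) / Π_{ℓ=1}^{r(E)} gcd(m, e_{ℓ,E})) · t^{r(E) − r(J)} − 1 ) as polynomials in ℚ[t]. -/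
/-!
Put `p_K = (Π_ℓ gcd(m, e_{ℓ,K}) / Π_ℓ gcd(m, e_{ℓ,E})) t^{r(E) - r(K)}`. Then `f_i^m` is the sum,
over the `J` with `|J| = n - i`, of the Möbius transform `g_J = Σ_{K ⊇ J} (-1)^{|K|-|J|} p_K`.
Möbius inversion `p_J = Σ_{K ⊇ J} g_K`, together with counting the `J ⊆ K` of a given size, gives
`Σ_{|J| = c} p_J = Σ_i binom(n - i, c) f_i^m`. For `c = n - d'_m` only `i = d'_m` and `i = 0`
(where `f_0^m = p_E = 1`) survive, which is the claim. For `c = 0` the identity reads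
`Σ_i f_i^m = p_∅ ≠ 1` (as `r(E) > 0`), so `d'_m` is the minimum of a nonempty set and `d'_m ≤ n`.
-/

open scoped BigOperators

open Finset

namespace ArrCode

section UpperMobius

variable {α M : Type*} [DecidableEq α] [AddCommGroup M]

theorem sum_Icc_neg_one_pow_card_sub {J L : Finset α} (hJL : J ⊆ L) :
    ∑ K ∈ Icc J L, (-1 : ℤ) ^ (#L - #K) = if L = J then 1 else 0 := by
  have hcompl :
      ∑ K ∈ Icc J L, (-1 : ℤ) ^ (#L - #K) = ∑ T ∈ (L \ J).powerset, (-1 : ℤ) ^ #T := by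
    refine sum_nbij' (L \ ·) (L \ ·) (fun K hK => ?_) (fun T hT => ?_) (fun K hK => ?_)
      (fun T hT => ?_) (fun K hK => ?_)
    · simpa using sdiff_subset_sdiff le_rfl (mem_Icc.mp hK).1
    · rw [mem_powerset] at hT
      simpa [subset_sdiff] using ⟨hJL, disjoint_sdiff.mono_right hT⟩
    · exact Finset.sdiff_sdiff_eq_self (mem_Icc.mp hK).2
    · exact Finset.sdiff_sdiff_eq_self ((mem_powerset.mp hT).trans sdiff_subset)
    · rw [card_sdiff_of_subset (mem_Icc.mp hK).2]
  rw [hcompl, sum_powerset_neg_one_pow_card]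
  simp only [sdiff_eq_empty_iff_subset]
  exact if_congr ⟨fun h => h.antisymm hJL, fun h => h.le⟩ rfl rfl

variable [Fintype α]

def upperMobius (p : Finset α → M) (J : Finset α) : M :=
  ∑ K ∈ univ.filter (J ⊆ ·), (-1 : ℤ) ^ (#K - #J) • p K

theorem sum_upperMobius (p : Finset α → M) (J : Finset α) :
    ∑ K ∈ univ.filter (J ⊆ ·), upperMobius p K = p J := by
  unfold upperMobius
  rw [sum_comm' (t' := univ.filter (J ⊆ ·)) (s' := Icc J) (fun K L => by
    simp only [mem_filter, mem_univ, true_and, mem_Icc]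
    exact ⟨fun h => ⟨⟨h.1, h.2⟩, h.1.trans h.2⟩, fun h => h.1⟩)]
  calc ∑ L ∈ univ.filter (J ⊆ ·), ∑ K ∈ Icc J L, (-1 : ℤ) ^ (#L - #K) • p L
      = ∑ L ∈ univ.filter (J ⊆ ·), if J = L then p L else 0 := by
        refine sum_congr rfl fun L hL => ?_
        rw [← sum_smul, sum_Icc_neg_one_pow_card_sub (mem_filter.mp hL).2]
        rcases eq_or_ne L J with rfl | h
        · simp
        · simp [h, h.symm]
    _ = p J := by simp

def codimLayer (p : Finset α → M) (i : ℕ) : M :=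
  ∑ J ∈ univ.filter (fun J : Finset α => #J = Fintype.card α - i), upperMobius p J

theorem codimLayer_zero (p : Finset α → M) : codimLayer p 0 = p univ := by
  simp [codimLayer, card_eq_iff_eq_univ, filter_eq', upperMobius]

theorem sum_card_eq_sum_choose_smul_codimLayer (p : Finset α → M) (c : ℕ) :
    ∑ J ∈ univ.filter (#· = c), p J
      = ∑ i ∈ range (Fintype.card α + 1), (Fintype.card α - i).choose c • codimLayer p i := by
  set N := Fintype.card α
  calc ∑ J ∈ univ.filter (#· = c), p J
      = ∑ J ∈ univ.filter (#· = c), ∑ K ∈ univ.filter (J ⊆ ·), upperMobius p K :=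
        sum_congr rfl fun J _ => (sum_upperMobius p J).symm
    _ = ∑ K, ∑ J ∈ powersetCard c K, upperMobius p K :=
        sum_comm' fun J K => by simp [mem_powersetCard, and_comm]
    _ = ∑ K, (#K).choose c • upperMobius p K := by simp
    _ = ∑ i ∈ range (N + 1), ∑ K ∈ univ.filter (fun K : Finset α => N - #K = i),
          (#K).choose c • upperMobius p K :=
        (sum_fiberwise_of_maps_to (fun K _ => mem_range.mpr (by omega)) _).symm
    _ = _ := by
        refine sum_congr rfl fun i hi => ?_
        have hfiber : univ.filter (fun K : Finset α => N - #K = i) = univ.filter (#· = N - i) :=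
          filter_congr fun K _ => by have := card_le_univ K; have := mem_range.mp hi; omega
        rw [codimLayer, smul_sum, hfiber]
        exact sum_congr rfl fun K hK => by rw [(mem_filter.mp hK).2]

theorem exists_codimLayer_ne_zero {p : Finset α → M} (h : p univ ≠ p ∅) :
    ∃ i, 0 < i ∧ i ≤ Fintype.card α ∧ codimLayer p i ≠ 0 := by
  by_contra! hvan
  refine h (Eq.symm ?_)
  calc p ∅ = ∑ J ∈ univ.filter (#· = 0), p J := by simp [card_eq_zero, filter_eq']
    _ = ∑ i ∈ range (Fintype.card α + 1), (Fintype.card α - i).choose 0 • codimLayer p i :=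
        sum_card_eq_sum_choose_smul_codimLayer p 0
    _ = (Fintype.card α - 0).choose 0 • codimLayer p 0 :=
        sum_eq_single_of_mem 0 (by simp) fun i hi hi0 => by
          rw [hvan i (Nat.pos_of_ne_zero hi0) (Nat.lt_succ_iff.mp (mem_range.mp hi)), smul_zero]
    _ = p univ := by simp [codimLayer_zero]

theorem codimLayer_eq_sum_sub_of_forall_lt {p : Finset α → M} {d : ℕ} (hd : 0 < d)
    (hdN : d ≤ Fintype.card α) (hvan : ∀ i, 0 < i → i < d → codimLayer p i = 0) :
    codimLayer p d = ∑ J ∈ univ.filter (#· = Fintype.card α - d), (p J - p univ) := by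
  have hsplit : ∑ J ∈ univ.filter (#· = Fintype.card α - d), p J
      = (Fintype.card α).choose d • p univ + codimLayer p d := by
    rw [sum_card_eq_sum_choose_smul_codimLayer,
      sum_eq_add 0 d hd.ne (fun i hi hi' => ?_) (by simp) (by simp; omega),
      codimLayer_zero, Nat.sub_zero, Nat.choose_symm hdN, Nat.choose_self, one_smul]
    rcases lt_or_gt_of_ne hi'.2 with hlt | hgt
    · rw [hvan i (Nat.pos_of_ne_zero hi'.1) hlt, smul_zero]
    · rw [Nat.choose_eq_zero_of_lt (by have := mem_range.mp hi; omega), zero_smul]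
  rw [sum_sub_distrib, sum_const, hsplit]
  simp [Nat.choose_symm hdN]

end UpperMobius

open Polynomial

variable {k n : ℕ}

theorem rk_empty_s9 (G : Matrix (Fin k) (Fin n) ℤ) : rk G ∅ = 0 :=
  Nat.le_zero.mp ((Matrix.rank_le_card_width _).trans_eq (by simp))

theorem rk_pos_of_mem (G : Matrix (Fin k) (Fin n) ℤ) {J : Finset (Fin n)} {i : Fin k} {j : Fin n}
    (hj : j ∈ J) (hij : G i j ≠ 0) : 0 < rk G J := by
  rw [rk, Matrix.rank, Module.finrank_pos_iff_exists_ne_zero]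
  refine ⟨⟨_, LinearMap.mem_range_self _ (Pi.single (⟨j, hj⟩ : J) 1)⟩, fun hcol => hij ?_⟩
  simpa using congrFun (congrArg Subtype.val hcol) i

theorem gcdProd_pos (G : Matrix (Fin k) (Fin n) ℤ) {m : ℕ} (hm : 0 < m) (J : Finset (Fin n)) :
    0 < gcdProd G m J :=
  prod_pos fun _ _ => Nat.gcd_pos_of_pos_left _ hm

noncomputable def basicPoly (G : Matrix (Fin k) (Fin n) ℤ) (m : ℕ) (K : Finset (Fin n)) : ℚ[X] :=
  C ((gcdProd G m K : ℚ) / gcdProd G m univ) * X ^ (rk G univ - rk G K)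

theorem fPoly_eq_codimLayer (G : Matrix (Fin k) (Fin n) ℤ) (m i : ℕ) :
    fPoly G m i = codimLayer (basicPoly G m) i := by
  rw [fPoly, codimLayer, powerset_univ, Fintype.card_fin]
  refine sum_congr rfl fun J _ => ?_
  rw [upperMobius]
  refine sum_congr rfl fun K _ => ?_
  simp [basicPoly, zsmul_eq_mul, mul_div_assoc, mul_assoc]

theorem basicPoly_univ (G : Matrix (Fin k) (Fin n) ℤ) {m : ℕ} (hm : 0 < m) :
    basicPoly G m univ = 1 := by
  have hne : (gcdProd G m univ : ℚ) ≠ 0 := Nat.cast_ne_zero.mpr (gcdProd_pos G hm univ).ne'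
  simp [basicPoly, div_self hne]

theorem basicPoly_empty_ne_one (G : Matrix (Fin k) (Fin n) ℤ) (m : ℕ) (hr : 0 < rk G univ) :
    basicPoly G m ∅ ≠ 1 := by
  intro h
  simpa [basicPoly, rk_empty_s9, coeff_C_mul_X_pow, hr.ne] using congrArg (coeff · 0) h

theorem stmt9_general (k n : ℕ) (hn : 1 ≤ n) (G : Matrix (Fin k) (Fin n) ℤ)
    (hG : ∀ j : Fin n, ∃ i : Fin k, G i j ≠ 0)
    (m : ℕ) (hm1 : 1 ≤ m) :
    fPoly G m (dPrime G m) =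
      ∑ J ∈ (Finset.univ : Finset (Fin n)).powerset.filter
          (fun J => J.card = n - dPrime G m),
        (Polynomial.C ((gcdProd G m J : ℚ) / (gcdProd G m Finset.univ : ℚ)) *
            Polynomial.X ^ (rk G Finset.univ - rk G J) - 1) := by
  have hlayer := fPoly_eq_codimLayer G m
  obtain ⟨i₀, hi₀, hi₀n, hfi₀⟩ : ∃ i, 0 < i ∧ i ≤ n ∧ fPoly G m i ≠ 0 := by
    obtain ⟨r, hr⟩ := hG ⟨0, hn⟩
    have hne := (basicPoly_empty_ne_one G m (rk_pos_of_mem G (mem_univ _) hr)).symm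
    rw [← basicPoly_univ G hm1] at hne
    simpa [hlayer] using exists_codimLayer_ne_zero hne
  have hi₀mem : i₀ ∈ {i | 0 < i ∧ fPoly G m i ≠ 0} := ⟨hi₀, hfi₀⟩
  have hd : 0 < dPrime G m := (Nat.sInf_mem ⟨i₀, hi₀mem⟩).1
  have hdn : dPrime G m ≤ n := (Nat.sInf_le hi₀mem).trans hi₀n
  have hvan : ∀ i, 0 < i → i < dPrime G m → codimLayer (basicPoly G m) i = 0 :=
    fun i hi hlt => by
      by_contra h
      exact Nat.notMem_of_lt_sInf hlt ⟨hi, by rwa [hlayer]⟩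
  rw [hlayer, codimLayer_eq_sum_sub_of_forall_lt hd (by simpa) hvan, powerset_univ,
    Fintype.card_fin, basicPoly_univ G hm1]
  rfl

theorem stmt9 (k n : ℕ) (hk : 1 ≤ k) (hn : 1 ≤ n) (G : Matrix (Fin k) (Fin n) ℤ)
    (hG : ∀ j : Fin n, ∃ i : Fin k, G i j ≠ 0)
    (m : ℕ) (hm1 : 1 ≤ m) (hm2 : m ≤ lcmPeriod G) :
    fPoly G m (dPrime G m) =
      ∑ J ∈ (Finset.univ : Finset (Fin n)).powerset.filter
          (fun J => J.card = n - dPrime G m),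
        (Polynomial.C ((gcdProd G m J : ℚ) / (gcdProd G m Finset.univ : ℚ)) *
            Polynomial.X ^ (rk G Finset.univ - rk G J) - 1) :=
  stmt9_general k n hn G hG m hm1

end ArrCode
end

section
/- Let k ≥ 2 and q ≥ 1 be integers. (a) The code N_k(q) contains no codeword of odd Hamming weight less than k. (b) The code Z_k(q) contains no codeword of odd Hamming weight at most k. (c) If k ≥ 3, then neither N_k(q) nor Z_k(q) contains a codeword of Hamming weight 2. -/
/-!
Put `s = ∑ᵢ uᵢ`. The codeword `u Ñ_k` has coordinates `uᵢ` and `s - uᵢ`, so its weight is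
`wt u + d(u, s𝟙)`, and `u Ž_k` has one more coordinate, `s`. If `s = 0` this weight is
`2 wt u`, which is even and not `2`, because a vector with a single nonzero entry cannot sum
to `0`. If `s ≠ 0`, the triangle inequality `k = d(0, s𝟙) ≤ wt u + d(u, s𝟙)` gives weight at
least `k` for `Ñ_k`, and at least `k + 1` for `Ž_k`.
-/

open scoped BigOperators

namespace ArrCode

/-- The matrix `Ñ_k = (I_k ∣ J_k − I_k)`. -/
def Ntilde (k : ℕ) : Matrix (Fin k) (Fin (2 * k)) ℤ :=
  Matrix.of fun i j =>
    if (j : ℕ) < k then (if (i : ℕ) = (j : ℕ) then 1 else 0)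
    else (if (i : ℕ) = (j : ℕ) - k then 0 else 1)

/-- The matrix `Ž_k = (I_k ∣ J_k − I_k ∣ 1_k)`. -/
def Ztilde (k : ℕ) : Matrix (Fin k) (Fin (2 * k + 1)) ℤ :=
  Matrix.of fun i j =>
    if (j : ℕ) < k then (if (i : ℕ) = (j : ℕ) then 1 else 0)
    else if (j : ℕ) < 2 * k then (if (i : ℕ) = (j : ℕ) - k then 0 else 1)
    else 1

end ArrCode

section Hamming

variable {ι ι' β : Type*} [Fintype ι] [Fintype ι'] [DecidableEq β]

theorem hammingNorm_comp_equiv [Zero β] (x : ι' → β) (e : ι ≃ ι') :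
    hammingNorm (x ∘ e) = hammingNorm x := by
  simp only [hammingNorm, Finset.card_filter]
  exact e.sum_comp fun i => if x i ≠ 0 then 1 else 0

theorem hammingNorm_append [Zero β] {m n : ℕ} (x : Fin m → β) (y : Fin n → β) :
    hammingNorm (Fin.append x y) = hammingNorm x + hammingNorm y := by
  simp only [hammingNorm, Finset.card_filter, Fin.sum_univ_add, Fin.append_left, Fin.append_right]

theorem hammingNorm_const [Zero β] (a : β) :
    hammingNorm (fun _ : ι => a) = if a = 0 then 0 else Fintype.card ι := by
  split_ifs with ha <;> simp [hammingNorm, ha]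

theorem card_le_hammingNorm_add_hammingDist_const [Zero β] (u : ι → β) {s : β} (hs : s ≠ 0) :
    Fintype.card ι ≤ hammingNorm u + hammingDist u (fun _ => s) := by
  calc Fintype.card ι = hammingDist 0 (fun _ : ι => s) := by
        rw [hammingDist_zero_left, hammingNorm_const, if_neg hs]
    _ ≤ hammingDist 0 u + hammingDist u (fun _ => s) := hammingDist_triangle _ _ _
    _ = hammingNorm u + hammingDist u (fun _ => s) := by rw [hammingDist_zero_left]

theorem hammingNorm_ne_one_of_sum_eq_zero [AddCommMonoid β] {u : ι → β} (h : ∑ i, u i = 0) :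
    hammingNorm u ≠ 1 := by
  intro h1
  obtain ⟨i, hi⟩ := Finset.card_eq_one.mp h1
  have hui : i ∈ ({i | u i ≠ 0} : Finset ι) := hi ▸ Finset.mem_singleton_self i
  rw [← Finset.sum_filter_ne_zero, hi, Finset.sum_singleton] at h
  exact (Finset.mem_filter.mp hui).2 h

end Hamming

namespace ArrCode

variable {k q : ℕ}

theorem vecMul_Ntilde_comp_finCongr (u : Fin k → ZMod q) :
    Matrix.vecMul u (Gmod (Ntilde k) q) ∘ finCongr (two_mul k).symm =
      Fin.append u fun i => ∑ j, u j - u i := by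
  funext j
  refine Fin.addCases (fun i => ?left) (fun i => ?right) j
  case left => simp [Matrix.vecMul, dotProduct, Gmod, Ntilde, Fin.val_eq_val, eq_comm]
  case right =>
    rw [Function.comp_apply, Fin.append_right]
    simp [Matrix.vecMul, dotProduct, Gmod, Ntilde, Fin.val_eq_val, Finset.sum_ite, Finset.filter_ne',
      Finset.sum_erase_eq_sub]

theorem vecMul_Ztilde_comp_finCongr (u : Fin k → ZMod q) :
    Matrix.vecMul u (Gmod (Ztilde k) q) ∘ finCongr (by omega : k + k + 1 = 2 * k + 1) =
      Fin.append (Fin.append u fun i => ∑ j, u j - u i) fun _ : Fin 1 => ∑ j, u j := by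
  funext j
  refine Fin.addCases (fun j => Fin.addCases (fun i => ?left) (fun i => ?mid) j) (fun i => ?last) j
  case left => simp [Matrix.vecMul, dotProduct, Gmod, Ztilde, Fin.val_eq_val, eq_comm]
  case mid =>
    rw [Function.comp_apply, Fin.append_left, Fin.append_right]
    simp [Matrix.vecMul, dotProduct, Gmod, Ztilde, Fin.val_eq_val, Finset.sum_ite, Finset.filter_ne',
      Finset.sum_erase_eq_sub, two_mul]
  case last =>
    obtain rfl := Subsingleton.elim i 0
    simp [Matrix.vecMul, dotProduct, Gmod, Ztilde, two_mul]

theorem hammingNorm_vecMul_Ntilde (u : Fin k → ZMod q) :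
    hammingNorm (Matrix.vecMul u (Gmod (Ntilde k) q)) =
      hammingNorm u + hammingDist u fun _ => ∑ j, u j := by
  rw [← hammingNorm_comp_equiv _ (finCongr (two_mul k).symm), vecMul_Ntilde_comp_finCongr,
    hammingNorm_append]
  congr 1
  simp only [hammingNorm, hammingDist, sub_ne_zero, ne_comm]

theorem hammingNorm_vecMul_Ztilde (u : Fin k → ZMod q) :
    hammingNorm (Matrix.vecMul u (Gmod (Ztilde k) q)) =
      hammingNorm u + (hammingDist u fun _ => ∑ j, u j) + if ∑ j, u j = 0 then 0 else 1 := by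
  rw [← hammingNorm_comp_equiv _ (finCongr (by omega : k + k + 1 = 2 * k + 1)),
    vecMul_Ztilde_comp_finCongr, hammingNorm_append, hammingNorm_append, hammingNorm_const,
    Fintype.card_fin]
  congr 2
  simp only [hammingNorm, hammingDist, sub_ne_zero, ne_comm]

theorem even_and_ne_two_or_le_hammingNorm_vecMul_Ntilde (u : Fin k → ZMod q) :
    (Even (hammingNorm (Matrix.vecMul u (Gmod (Ntilde k) q))) ∧
        hammingNorm (Matrix.vecMul u (Gmod (Ntilde k) q)) ≠ 2) ∨
      k ≤ hammingNorm (Matrix.vecMul u (Gmod (Ntilde k) q)) := by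
  rw [hammingNorm_vecMul_Ntilde]
  rcases eq_or_ne (∑ j, u j) 0 with hS | hS
  · have h1 := hammingNorm_ne_one_of_sum_eq_zero hS
    rw [hS, show (hammingDist u fun _ => 0) = hammingNorm u from hammingDist_zero_right u]
    exact Or.inl ⟨⟨_, rfl⟩, by omega⟩
  · simpa using Or.inr (card_le_hammingNorm_add_hammingDist_const u hS)

theorem even_and_ne_two_or_lt_hammingNorm_vecMul_Ztilde (u : Fin k → ZMod q) :
    (Even (hammingNorm (Matrix.vecMul u (Gmod (Ztilde k) q))) ∧
        hammingNorm (Matrix.vecMul u (Gmod (Ztilde k) q)) ≠ 2) ∨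
      k < hammingNorm (Matrix.vecMul u (Gmod (Ztilde k) q)) := by
  rw [hammingNorm_vecMul_Ztilde]
  rcases eq_or_ne (∑ j, u j) 0 with hS | hS
  · have h1 := hammingNorm_ne_one_of_sum_eq_zero hS
    rw [if_pos hS, hS, show (hammingDist u fun _ => 0) = hammingNorm u from hammingDist_zero_right u]
    exact Or.inl ⟨⟨_, rfl⟩, by omega⟩
  · have hcard := card_le_hammingNorm_add_hammingDist_const u hS
    rw [Fintype.card_fin] at hcard
    rw [if_neg hS]
    omega

theorem stmt16_general (k q : ℕ) :
    (∀ c ∈ code (Ntilde k) q, Odd (hammingNorm c) → k ≤ hammingNorm c) ∧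
    (∀ c ∈ code (Ztilde k) q, Odd (hammingNorm c) → k < hammingNorm c) ∧
    (3 ≤ k →
      (∀ c ∈ code (Ntilde k) q, hammingNorm c ≠ 2) ∧
      (∀ c ∈ code (Ztilde k) q, hammingNorm c ≠ 2)) := by
  refine ⟨?_, ?_, fun hk => ⟨?_, ?_⟩⟩ <;> rintro _ ⟨u, rfl⟩ <;> beta_reduce
  · exact fun hodd => (even_and_ne_two_or_le_hammingNorm_vecMul_Ntilde u).resolve_left
      fun h => (Nat.not_even_iff_odd.mpr hodd) h.1
  · exact fun hodd => (even_and_ne_two_or_lt_hammingNorm_vecMul_Ztilde u).resolve_left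
      fun h => (Nat.not_even_iff_odd.mpr hodd) h.1
  · rcases even_and_ne_two_or_le_hammingNorm_vecMul_Ntilde u with ⟨-, h⟩ | h
    exacts [h, by omega]
  · rcases even_and_ne_two_or_lt_hammingNorm_vecMul_Ztilde u with ⟨-, h⟩ | h
    exacts [h, by omega]

theorem stmt16 (k q : ℕ) (hk : 2 ≤ k) (hq : 1 ≤ q) :
    (∀ c ∈ code (Ntilde k) q, Odd (hammingNorm c) → k ≤ hammingNorm c) ∧
    (∀ c ∈ code (Ztilde k) q, Odd (hammingNorm c) → k < hammingNorm c) ∧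
    (3 ≤ k →
      (∀ c ∈ code (Ntilde k) q, hammingNorm c ≠ 2) ∧
      (∀ c ∈ code (Ztilde k) q, hammingNorm c ≠ 2)) :=
  stmt16_general k q

end ArrCode
end
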